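/- arXiv:1101.5584 — 4 statements merged into one kernel-verified Lean document; each statement's English description precedes it below -/
import Mathlib

section
/- Let T(y) = p y'' + q y' + r y with polynomial coefficients p, q, r, and suppose T preserves a degree-regular polynomial flag, i.e., for each k there is a polynomial y_k of degree n_k with n_1 < n_2 < ... such that T maps span{y_1,...,y_k} into itself. Then deg p ≤ 2, deg q ≤ 1, and deg r ≤ 0; in particular T preserves the standard flag P_0 ⊂ P_1 ⊂ P_2 ⊂ .... -/
open Polynomial

/-!
Let `d ≥ 1` with `deg p ≤ d + 2`, `deg q ≤ d + 1`, `deg r ≤ d`, and let `α, β, γ` be the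
coefficients of `p, q, r` in these degrees. For `f` of degree `N`, the coefficient of `X ^ (N + d)`
in `T f` is the leading coefficient of `f` times `α N (N - 1) + β N + γ`, the indicial polynomial
of the degree-`d` part of `T`. Flag invariance forces `deg T (y k) ≤ n k`, so this indicial
polynomial has the infinitely many roots `n k` and vanishes; hence `α = β = γ = 0`, and descending
in `d` shows that `T` is of Bochner type.
-/

namespace Polynomial

section CommRing

variable {R : Type*} [CommRing R]

noncomputable def bochnerOp (p q r f : R[X]) : R[X] :=
  p * derivative (derivative f) + q * derivative f + r * f

noncomputable def indicialPoly (a b c : R) : R[X] := C a * X * (X - 1) + C b * X + C c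

theorem indicialPoly_eq_zero_iff {a b c : R} : indicialPoly a b c = 0 ↔ a = 0 ∧ b = 0 ∧ c = 0 := by
  constructor
  · intro h
    have ha : a = 0 := by
      simpa [indicialPoly, mul_sub, mul_assoc, ← pow_two, coeff_X] using congrArg (coeff · 2) h
    have hb : b = 0 := by
      simpa [indicialPoly, ha, coeff_X] using congrArg (coeff · 1) h
    have hc : c = 0 := by
      simpa [indicialPoly, ha, hb] using congrArg (coeff · 0) h
    exact ⟨ha, hb, hc⟩
  · rintro ⟨rfl, rfl, rfl⟩
    simp [indicialPoly]

theorem coeff_bochnerOp_of_natDegree_eq {p q r f : R[X]} {d M : ℕ}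
    (hp : p.natDegree ≤ d + 2) (hq : q.natDegree ≤ d + 1) (hr : r.natDegree ≤ d)
    (hf : f.natDegree = M + 2) :
    (bochnerOp p q r f).coeff (M + 2 + d) =
      f.leadingCoeff * (indicialPoly (p.coeff (d + 2)) (q.coeff (d + 1)) (r.coeff d)).eval
        ((M + 2 : ℕ) : R) := by
  have hf1 : (derivative f).natDegree ≤ M + 1 := (natDegree_derivative_le f).trans (by omega)
  have hf2 : (derivative (derivative f)).natDegree ≤ M :=
    (natDegree_derivative_le _).trans (by omega)
  have hp' := coeff_mul_add_eq_of_natDegree_le hp hf2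
  have hq' := coeff_mul_add_eq_of_natDegree_le hq hf1
  have hr' := coeff_mul_add_eq_of_natDegree_le hr hf.le
  rw [show M + 2 + d = d + 2 + M by omega, bochnerOp, coeff_add, coeff_add, hp',
    show d + 2 + M = d + 1 + (M + 1) by omega, hq', show d + 1 + (M + 1) = d + (M + 2) by omega,
    hr', leadingCoeff, hf, indicialPoly]
  simp only [coeff_derivative, eval_add, eval_mul, eval_C, eval_X, eval_sub, eval_one]
  push_cast
  ring

theorem natDegree_mul_iterate_derivative_le {p : R[X]} {k : ℕ} (hp : p.natDegree ≤ k) (f : R[X]) :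
    (p * derivative^[k] f).natDegree ≤ f.natDegree := by
  by_cases hf : f.natDegree < k
  · simp [iterate_derivative_eq_zero hf]
  · exact natDegree_mul_le.trans (by have := natDegree_iterate_derivative f k; omega)

theorem natDegree_bochnerOp_le {p q r : R[X]} (hp : p.natDegree ≤ 2) (hq : q.natDegree ≤ 1)
    (hr : r.natDegree ≤ 0) (f : R[X]) : (bochnerOp p q r f).natDegree ≤ f.natDegree :=
  natDegree_add_le_of_degree_le
    (natDegree_add_le_of_degree_le (natDegree_mul_iterate_derivative_le hp f)
      (natDegree_mul_iterate_derivative_le hq f))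
    (natDegree_mul_iterate_derivative_le hr f)

end CommRing

theorem natDegree_le_of_mem_span_image {R ι : Type*} [Semiring R] {y : ι → R[X]} {s : Set ι}
    {N : ℕ} (hy : ∀ i ∈ s, (y i).natDegree ≤ N) {f : R[X]} (hf : f ∈ Submodule.span R (y '' s)) :
    f.natDegree ≤ N := by
  suffices Submodule.span R (y '' s) ≤ degreeLE R N from
    natDegree_le_iff_degree_le.mpr (mem_degreeLE.mp (this hf))
  rw [Submodule.span_le]
  rintro _ ⟨i, hi, rfl⟩
  exact mem_degreeLE.mpr (natDegree_le_iff_degree_le.mp (hy i hi))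

section IsDomain

variable {R : Type*} [CommRing R] [IsDomain R] [CharZero R] {p q r : R[X]} {y : ℕ → R[X]}

theorem coeff_top_eq_zero_of_forall_natDegree_bochnerOp_le
    (hmono : StrictMono fun k => (y k).natDegree)
    (hle : ∀ k, (bochnerOp p q r (y k)).natDegree ≤ (y k).natDegree)
    {d : ℕ} (hd : 1 ≤ d) (hp : p.natDegree ≤ d + 2) (hq : q.natDegree ≤ d + 1)
    (hr : r.natDegree ≤ d) :
    p.coeff (d + 2) = 0 ∧ q.coeff (d + 1) = 0 ∧ r.coeff d = 0 := by
  rw [← indicialPoly_eq_zero_iff]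
  set I := indicialPoly (p.coeff (d + 2)) (q.coeff (d + 1)) (r.coeff d)
  have hroot : ∀ k, I.IsRoot ((y (k + 2)).natDegree : R) := by
    intro k
    obtain ⟨M, hM⟩ : ∃ M, (y (k + 2)).natDegree = M + 2 :=
      ⟨_, (Nat.sub_add_cancel ((by omega : 2 ≤ k + 2).trans hmono.le_apply)).symm⟩
    have hy : y (k + 2) ≠ 0 := ne_zero_of_natDegree_gt (n := 0) (by omega)
    have hvanish := coeff_eq_zero_of_natDegree_lt ((hle (k + 2)).trans_lt
      (by omega : (y (k + 2)).natDegree < M + 2 + d))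
    rw [coeff_bochnerOp_of_natDegree_eq hp hq hr hM] at hvanish
    rw [IsRoot, hM]
    exact (mul_eq_zero.mp hvanish).resolve_left (leadingCoeff_ne_zero.mpr hy)
  refine eq_zero_of_infinite_isRoot I (Set.infinite_of_injective_forall_mem ?_ hroot)
  intro a b hab
  simpa using hmono.injective (Nat.cast_injective hab)

theorem natDegree_le_of_forall_natDegree_bochnerOp_le
    (hmono : StrictMono fun k => (y k).natDegree)
    (hle : ∀ k, (bochnerOp p q r (y k)).natDegree ≤ (y k).natDegree) :
    p.natDegree ≤ 2 ∧ q.natDegree ≤ 1 ∧ r.natDegree = 0 := by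
  suffices ∀ d, p.natDegree ≤ d + 2 → q.natDegree ≤ d + 1 → r.natDegree ≤ d →
      p.natDegree ≤ 2 ∧ q.natDegree ≤ 1 ∧ r.natDegree = 0 from
    this (p.natDegree + q.natDegree + r.natDegree) (by omega) (by omega) (by omega)
  intro d
  induction d with
  | zero => exact fun hp hq hr => ⟨hp, hq, Nat.le_zero.mp hr⟩
  | succ d ih =>
    intro hp hq hr
    obtain ⟨hp', hq', hr'⟩ :=
      coeff_top_eq_zero_of_forall_natDegree_bochnerOp_le hmono hle (by omega) hp hq hr
    exact ih (natDegree_le_pred hp hp') (natDegree_le_pred hq hq') (natDegree_le_pred hr hr')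

end IsDomain

end Polynomial

theorem stmt3_general (p q r : Polynomial ℝ) (y : ℕ → Polynomial ℝ) (n : ℕ → ℕ)
    (hdeg : ∀ k, (y k).natDegree = n k) (hmono : StrictMono n)
    (hT : ∀ k : ℕ, ∀ j ≤ k,
      p * derivative (derivative (y j)) + q * derivative (y j) + r * y j ∈
        Submodule.span ℝ (y '' {i | i ≤ k})) :
    p.natDegree ≤ 2 ∧ q.natDegree ≤ 1 ∧ r.natDegree = 0 ∧
      ∀ (m : ℕ) (f : Polynomial ℝ), f.natDegree ≤ m →
        (p * derivative (derivative f) + q * derivative f + r * f).natDegree ≤ m := by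
  have hmono' : StrictMono fun k => (y k).natDegree := by simpa only [hdeg] using hmono
  have hflag : ∀ k, (bochnerOp p q r (y k)).natDegree ≤ (y k).natDegree := fun k =>
    natDegree_le_of_mem_span_image (fun i hi => hmono'.monotone hi) (hT k k le_rfl)
  obtain ⟨hp, hq, hr⟩ := natDegree_le_of_forall_natDegree_bochnerOp_le hmono' hflag
  exact ⟨hp, hq, hr, fun m f hf => (natDegree_bochnerOp_le hp hq hr.le f).trans hf⟩

/-- A polynomial-coefficient second-order operator preserving a degree-regular
polynomial flag is of Bochner type: `deg p ≤ 2`, `deg q ≤ 1`, `deg r ≤ 0`; in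
particular it preserves the standard flag `P₀ ⊂ P₁ ⊂ P₂ ⊂ …`. -/
theorem stmt3 (p q r : Polynomial ℝ) (y : ℕ → Polynomial ℝ) (n : ℕ → ℕ)
    (hy0 : ∀ k, y k ≠ 0) (hdeg : ∀ k, (y k).natDegree = n k) (hmono : StrictMono n)
    (hT : ∀ k : ℕ, ∀ j ≤ k,
      p * derivative (derivative (y j)) + q * derivative (y j) + r * y j ∈
        Submodule.span ℝ (y '' {i | i ≤ k})) :
    p.natDegree ≤ 2 ∧ q.natDegree ≤ 1 ∧ r.natDegree = 0 ∧
      ∀ (m : ℕ) (f : Polynomial ℝ), f.natDegree ≤ m →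
        (p * derivative (derivative f) + q * derivative f + r * f).natDegree ≤ m :=
  stmt3_general p q r y n hdeg hmono hT
end

section
/- The non-polynomial operator T(y) = y'' − 2(1 + 1/x) y' + (2/x) y preserves the flag spanned by {x+1, x², x³, ...}: T(x+1) lies in span{x+1}, and for each n ≥ 2, T(x^n) lies in span{x+1, x², ..., x^n}. -/
open Polynomial


/-- The second-order operator `T(y) = p y'' + q y' + r y` with rational coefficients,
applied to a polynomial `y`. -/
noncomputable def TR (p q r : RatFunc ℝ) (y : Polynomial ℝ) : RatFunc ℝ :=
  p * algebraMap (Polynomial ℝ) (RatFunc ℝ) (derivative (derivative y)) +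
  q * algebraMap (Polynomial ℝ) (RatFunc ℝ) (derivative y) +
  r * algebraMap (Polynomial ℝ) (RatFunc ℝ) y

/-- The subspaces of the flag spanned by `x+1, x², x³, …`. -/
noncomputable def flagE (k : ℕ) : Submodule ℝ (Polynomial ℝ) :=
  Submodule.span ℝ
    ({X + 1} ∪ (fun i => (X : Polynomial ℝ) ^ i) '' {i | 2 ≤ i ∧ i ≤ k})


lemma key (y z : Polynomial ℝ)
    (h : derivative (derivative y) * X - 2*(X+1) * derivative y + 2*y = z * X) :
    TR 1 (-2 * (1 + RatFunc.X⁻¹)) (2 * RatFunc.X⁻¹) y =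
      algebraMap (Polynomial ℝ) (RatFunc ℝ) z := by
  have hX : (RatFunc.X : RatFunc ℝ) ≠ 0 := RatFunc.X_ne_zero
  have h2 := congrArg (algebraMap (Polynomial ℝ) (RatFunc ℝ)) h
  push_cast [map_add, map_sub, map_mul, map_ofNat, RatFunc.algebraMap_X, map_one] at h2
  unfold TR
  field_simp
  linear_combination h2

/-- The nonpolynomial operator `T(y) = y'' − 2(1 + 1/x)y' + (2/x)y` preserves the flag
spanned by `{x+1, x², x³, …}`. -/
theorem stmt10 :
    (∃ z ∈ Submodule.span ℝ ({X + 1} : Set (Polynomial ℝ)),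
      TR 1 (-2 * (1 + RatFunc.X⁻¹)) (2 * RatFunc.X⁻¹) (X + 1) =
        algebraMap (Polynomial ℝ) (RatFunc ℝ) z) ∧
    ∀ n : ℕ, 2 ≤ n → ∃ z ∈ flagE n,
      TR 1 (-2 * (1 + RatFunc.X⁻¹)) (2 * RatFunc.X⁻¹) ((X : Polynomial ℝ) ^ n) =
        algebraMap (Polynomial ℝ) (RatFunc ℝ) z := by
  constructor
  · refine ⟨0, Submodule.zero_mem _, key _ _ ?_⟩
    simp
  · intro n hn
    obtain ⟨m, rfl⟩ : ∃ m, n = m + 2 := ⟨n - 2, by omega⟩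
    refine ⟨(((m:ℝ)+2)*((m:ℝ)+1) - 2*((m:ℝ)+2)) • X ^ m +
        ((2:ℝ) - 2*((m:ℝ)+2)) • X ^ (m+1), ?_, key _ _ ?_⟩
    · rcases m with _ | _ | k
      · have : (((0:ℕ):ℝ)+2)*(((0:ℕ):ℝ)+1) - 2*(((0:ℕ):ℝ)+2) = -2 := by norm_num
        rw [this]
        have : ((2:ℝ) - 2*(((0:ℕ):ℝ)+2)) = -2 := by norm_num
        rw [this]
        have : (-2 : ℝ) • (X:Polynomial ℝ) ^ 0 + (-2:ℝ) • X ^ (0+1) =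
            (-2 : ℝ) • (X + 1) := by
          rw [smul_eq_C_mul, smul_eq_C_mul, smul_eq_C_mul]; ring
        rw [this]
        exact Submodule.smul_mem _ _ (Submodule.subset_span (by left; rfl))
      · have h1 : (((1:ℕ):ℝ)+2)*(((1:ℕ):ℝ)+1) - 2*(((1:ℕ):ℝ)+2) = 0 := by norm_num
        rw [h1]; simp only [zero_smul, zero_add]
        refine Submodule.smul_mem _ _ (Submodule.subset_span ?_)
        exact Set.mem_union_right _ ⟨2, ⟨le_refl 2, by norm_num⟩, rfl⟩
      · refine Submodule.add_mem _ (Submodule.smul_mem _ _ (Submodule.subset_span ?_))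
          (Submodule.smul_mem _ _ (Submodule.subset_span ?_))
        · exact Set.mem_union_right _ ⟨k+2, ⟨by omega, by omega⟩, rfl⟩
        · exact Set.mem_union_right _ ⟨k+3, ⟨by omega, by omega⟩, rfl⟩
    · simp [derivative_X_pow, smul_eq_C_mul, map_ofNat]
      ring
end

section
/- Define y_{2k-1} = x^{2k-1} − (2k−1)x and y_{2k} = x^{2k} − k x² for k ≥ 2. Then each of the operators T₃(y) = (x²−1)y'' − 2x y', T₂(y) = x y'' − 2(1 + 2/(x²−1)) y', T₁(y) = y'' + x(1 − 4/(x²−1)) y' maps the span of {1, y₃, y₄, ..., y_n} into itself for every n ≥ 3. -/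
open Polynomial

/-- `y_{2k-1} = x^{2k-1} − (2k−1)x` and `y_{2k} = x^{2k} − k x²`. -/
noncomputable def yGKM (j : ℕ) : Polynomial ℝ :=
  if Odd j then X ^ j - C (j : ℝ) * X else X ^ j - C ((j : ℝ) / 2) * X ^ 2

/-- `span{1, y₃, y₄, …, y_n}`. -/
noncomputable def SGKM (n : ℕ) : Submodule ℝ (Polynomial ℝ) :=
  Submodule.span ℝ ({1} ∪ yGKM '' {j | 3 ≤ j ∧ j ≤ n})

/-!
For `n ≥ 3`, `span{1, y₃, …, y_n}` is exactly the space of polynomials `p` of degree `≤ n`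
with `x² - 1 ∣ p'`: every `y_j'` is a multiple of `x^{2m} - 1`, and conversely one peels off
the leading term with the monic `y_{deg p}` until degree `≤ 2` is reached, where `x² - 1 ∣ p'`
forces `p` to be constant. Writing `f' = (x² - 1) g`, the poles of `T₂` and `T₁` cancel, and
the derivative of each image is again `(x² - 1)` times an explicit polynomial in `g`.
-/

lemma yGKM_zero : yGKM 0 = 1 := by simp [yGKM]

lemma yGKM_two_mul_add_one (m : ℕ) :
    yGKM (2 * m + 1) = X ^ (2 * m + 1) - C (2 * m + 1 : ℝ) * X := by
  rw [yGKM, if_pos (odd_two_mul_add_one m)]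
  push_cast
  ring

lemma yGKM_two_mul_add_two (m : ℕ) :
    yGKM (2 * m + 2) = X ^ (2 * m + 2) - C (m + 1 : ℝ) * X ^ 2 := by
  rw [yGKM, if_neg (Nat.not_odd_iff_even.mpr ⟨m + 1, by ring⟩)]
  push_cast
  ring_nf

lemma natDegree_yGKM_le (j : ℕ) : (yGKM j).natDegree ≤ j := by
  obtain ⟨m, rfl | rfl⟩ := Nat.even_or_odd' j
  · rcases m with _ | m
    · simp [yGKM_zero]
    rw [mul_add_one, yGKM_two_mul_add_two]
    compute_degree
  · rw [yGKM_two_mul_add_one]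
    compute_degree

lemma coeff_yGKM_self {j : ℕ} (hj : 3 ≤ j) : (yGKM j).coeff j = 1 := by
  unfold yGKM
  split <;> simp [coeff_X, coeff_X_pow] <;> omega

lemma X_sq_sub_one_dvd_derivative_yGKM (j : ℕ) : (X ^ 2 - 1 : ℝ[X]) ∣ derivative (yGKM j) := by
  have key (m : ℕ) : (X ^ 2 - 1 : ℝ[X]) ∣ X ^ (2 * m) - 1 := by
    simpa [pow_mul] using sub_dvd_pow_sub_pow (X ^ 2 : ℝ[X]) 1 m
  obtain ⟨m, rfl | rfl⟩ := Nat.even_or_odd' j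
  · rcases m with _ | m
    · simp [yGKM_zero]
    have h : derivative (yGKM (2 * m + 2)) = (2 * m + 2 : ℝ[X]) * X * (X ^ (2 * m) - 1) := by
      simp [yGKM_two_mul_add_two, map_ofNat C]
      ring
    exact h ▸ (key m).mul_left _
  · have h : derivative (yGKM (2 * m + 1)) = (2 * m + 1 : ℝ[X]) * (X ^ (2 * m) - 1) := by
      simp [yGKM_two_mul_add_one, map_ofNat C]
      ring
    exact h ▸ (key m).mul_left _

lemma yGKM_mem_SGKM {n j : ℕ} (h3 : 3 ≤ j) (hjn : j ≤ n) : yGKM j ∈ SGKM n :=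
  Submodule.subset_span (Or.inr ⟨j, ⟨h3, hjn⟩, rfl⟩)

lemma C_mem_SGKM (n : ℕ) (a : ℝ) : C a ∈ SGKM n := by
  rw [← mul_one (C a), ← smul_eq_C_mul]
  exact Submodule.smul_mem _ _ (Submodule.subset_span (Or.inl rfl))

lemma natDegree_le_and_dvd_derivative_of_mem_SGKM {n : ℕ} {p : ℝ[X]} (hp : p ∈ SGKM n) :
    p.natDegree ≤ n ∧ X ^ 2 - 1 ∣ derivative p := by
  induction hp using Submodule.span_induction with
  | mem p hp =>
    rcases hp with rfl | ⟨j, ⟨-, hjn⟩, rfl⟩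
    · simp
    · exact ⟨(natDegree_yGKM_le j).trans hjn, X_sq_sub_one_dvd_derivative_yGKM j⟩
  | zero => simp
  | add p q _ _ hp hq =>
    exact ⟨(natDegree_add_le p q).trans (max_le hp.1 hq.1),
      (map_add derivative p q).symm ▸ dvd_add hp.2 hq.2⟩
  | smul a p _ hp =>
    exact ⟨(natDegree_smul_le a p).trans hp.1, derivative_smul a p ▸ dvd_smul_of_dvd a hp.2⟩

lemma natDegree_X_sq_sub_one {R : Type*} [Ring R] [Nontrivial R] :
    (X ^ 2 - 1 : R[X]).natDegree = 2 := by
  compute_degree!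

lemma X_sq_sub_one_ne_zero {R : Type*} [Ring R] [Nontrivial R] : (X ^ 2 - 1 : R[X]) ≠ 0 :=
  ne_zero_of_natDegree_gt (n := 0) (by rw [natDegree_X_sq_sub_one]; norm_num)

lemma eq_C_of_natDegree_le_two_of_X_sq_sub_one_dvd_derivative {p : ℝ[X]} (hp : p.natDegree ≤ 2)
    (hdvd : X ^ 2 - 1 ∣ derivative p) : p = C (p.coeff 0) := by
  have hp' : derivative p = 0 := by
    refine eq_zero_of_dvd_of_natDegree_lt hdvd ?_
    have := natDegree_derivative_le p
    rw [natDegree_X_sq_sub_one]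
    omega
  exact eq_C_of_natDegree_eq_zero (derivative_eq_zero.mp hp')

lemma natDegree_sub_smul_yGKM_le {p : ℝ[X]} {d : ℕ} (hd : 2 ≤ d) (hp : p.natDegree ≤ d + 1) :
    (p - p.coeff (d + 1) • yGKM (d + 1)).natDegree ≤ d := by
  rw [natDegree_le_iff_coeff_eq_zero]
  intro N hN
  rw [coeff_sub, coeff_smul, smul_eq_mul]
  rcases (Nat.succ_le_of_lt hN).eq_or_lt with rfl | hN'
  · rw [coeff_yGKM_self (by omega), mul_one, sub_self]
  · rw [coeff_eq_zero_of_natDegree_lt (by omega),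
      coeff_eq_zero_of_natDegree_lt ((natDegree_yGKM_le _).trans_lt hN'), mul_zero, sub_zero]

lemma mem_SGKM_of_natDegree_le_of_dvd {n : ℕ} (hn : 3 ≤ n) {p : ℝ[X]} (hp : p.natDegree ≤ n)
    (hdvd : X ^ 2 - 1 ∣ derivative p) : p ∈ SGKM n := by
  suffices ∀ d, 2 ≤ d → d ≤ n → ∀ p : ℝ[X], p.natDegree ≤ d → X ^ 2 - 1 ∣ derivative p →
      p ∈ SGKM n from this n (by omega) le_rfl p hp hdvd
  intro d hd
  induction d, hd using Nat.le_induction with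
  | base =>
    intro _ p hp hdvd
    rw [eq_C_of_natDegree_le_two_of_X_sq_sub_one_dvd_derivative hp hdvd]
    exact C_mem_SGKM n _
  | succ d hd ih =>
    intro hdn p hp hdvd
    have hq : p - p.coeff (d + 1) • yGKM (d + 1) ∈ SGKM n := by
      refine ih (by omega) _ (natDegree_sub_smul_yGKM_le hd hp) ?_
      rw [derivative_sub, derivative_smul]
      exact dvd_sub hdvd (dvd_smul_of_dvd _ (X_sq_sub_one_dvd_derivative_yGKM _))
    simpa using add_mem hq (Submodule.smul_mem _ (p.coeff (d + 1)) (yGKM_mem_SGKM (by omega) hdn))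

lemma mem_SGKM_iff {n : ℕ} (hn : 3 ≤ n) {p : ℝ[X]} :
    p ∈ SGKM n ↔ p.natDegree ≤ n ∧ X ^ 2 - 1 ∣ derivative p :=
  ⟨natDegree_le_and_dvd_derivative_of_mem_SGKM,
    fun h => mem_SGKM_of_natDegree_le_of_dvd hn h.1 h.2⟩

lemma natDegree_le_natDegree_mul_sub {R : Type*} [Semiring R] [NoZeroDivisors R] {q : R[X]}
    (hq : q ≠ 0) (g : R[X]) : g.natDegree ≤ (q * g).natDegree - q.natDegree := by
  by_cases hg : g = 0
  · simp [hg]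
  · rw [natDegree_mul hq hg]
    omega

lemma natDegree_le_sub_three_of_derivative_eq {n : ℕ} {f g : ℝ[X]} (hdeg : f.natDegree ≤ n)
    (hg : derivative f = (X ^ 2 - 1) * g) : g.natDegree ≤ n - 3 := by
  have := natDegree_le_natDegree_mul_sub X_sq_sub_one_ne_zero g
  have := natDegree_derivative_le f
  rw [← hg, natDegree_X_sq_sub_one] at *
  omega

lemma T₃_mem_SGKM {n : ℕ} (hn : 3 ≤ n) {f : ℝ[X]} (hf : f ∈ SGKM n) :
    (X ^ 2 - 1) * derivative (derivative f) - 2 * X * derivative f ∈ SGKM n := by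
  obtain ⟨hdeg, g, hg⟩ := (mem_SGKM_iff hn).1 hf
  refine (mem_SGKM_iff hn).2 ⟨?_, derivative (derivative (derivative f)) - 2 * g, ?_⟩
  · compute_degree
    omega
  · simp only [hg, derivative_mul, derivative_sub, derivative_X_pow_succ, derivative_X,
      derivative_one, derivative_ofNat, map_add, map_one, map_zero, Nat.cast_zero, Nat.cast_one]
    ring

lemma T₂_mem_SGKM {n : ℕ} (hn : 3 ≤ n) {f g : ℝ[X]} (hdeg : f.natDegree ≤ n)
    (hg : derivative f = (X ^ 2 - 1) * g) :
    X * derivative (derivative f) - 2 * derivative f - 4 * g ∈ SGKM n := by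
  have hg_deg := natDegree_le_sub_three_of_derivative_eq hdeg hg
  refine (mem_SGKM_iff hn).2 ⟨?_, X * derivative (derivative g) + 3 * derivative g, ?_⟩
  · compute_degree
    omega
  · simp only [hg, derivative_mul, derivative_sub, derivative_X_pow_succ, derivative_X,
      derivative_one, derivative_ofNat, map_add, map_one, map_zero, Nat.cast_zero, Nat.cast_one]
    ring

lemma T₁_mem_SGKM {n : ℕ} (hn : 3 ≤ n) {f g : ℝ[X]} (hdeg : f.natDegree ≤ n)
    (hg : derivative f = (X ^ 2 - 1) * g) :
    derivative (derivative f) + X * derivative f - 4 * (X * g) ∈ SGKM n := by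
  have hg_deg := natDegree_le_sub_three_of_derivative_eq hdeg hg
  refine (mem_SGKM_iff hn).2 ⟨?_, derivative (derivative g) + X * derivative g + 3 * g, ?_⟩
  · compute_degree
    omega
  · simp only [hg, derivative_mul, derivative_sub, derivative_X_pow_succ, derivative_X,
      derivative_one, derivative_ofNat, map_add, map_one, map_zero, Nat.cast_zero, Nat.cast_one]
    ring

lemma ratFunc_X_sq_sub_one_ne_zero : (RatFunc.X ^ 2 - 1 : RatFunc ℝ) ≠ 0 := by
  simpa using RatFunc.algebraMap_ne_zero (X_sq_sub_one_ne_zero (R := ℝ))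

lemma T₂_eq_algebraMap {f g : ℝ[X]} (hg : derivative f = (X ^ 2 - 1) * g) :
    TR (algebraMap ℝ[X] (RatFunc ℝ) X) (-2 * (1 + 2 / (RatFunc.X ^ 2 - 1))) 0 f =
      algebraMap ℝ[X] (RatFunc ℝ) (X * derivative (derivative f) - 2 * derivative f - 4 * g) := by
  have h := ratFunc_X_sq_sub_one_ne_zero
  rw [TR, hg]
  simp only [map_mul, map_sub, map_pow, map_one, map_ofNat, RatFunc.algebraMap_X,
    zero_mul, add_zero]
  field_simp
  ring

lemma T₁_eq_algebraMap {f g : ℝ[X]} (hg : derivative f = (X ^ 2 - 1) * g) :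
    TR 1 (RatFunc.X * (1 - 4 / (RatFunc.X ^ 2 - 1))) 0 f =
      algebraMap ℝ[X] (RatFunc ℝ) (derivative (derivative f) + X * derivative f - 4 * (X * g)) := by
  have h := ratFunc_X_sq_sub_one_ne_zero
  rw [TR, hg]
  simp only [map_mul, map_sub, map_add, map_pow, map_one, map_ofNat, RatFunc.algebraMap_X,
    zero_mul, add_zero, one_mul]
  field_simp
  ring

/-- The operators `T₃(y) = (x²−1)y'' − 2x y'`, `T₂(y) = x y'' − 2(1 + 2/(x²−1))y'`,
`T₁(y) = y'' + x(1 − 4/(x²−1))y'` each map `span{1, y₃, y₄, …, y_n}` into itself. -/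
theorem stmt11 : ∀ n : ℕ, 3 ≤ n → ∀ f ∈ SGKM n,
    ((X ^ 2 - 1) * derivative (derivative f) - 2 * X * derivative f ∈ SGKM n) ∧
    (∃ z ∈ SGKM n,
      TR (algebraMap (Polynomial ℝ) (RatFunc ℝ) X)
        (-2 * (1 + 2 / (RatFunc.X ^ 2 - 1))) 0 f =
          algebraMap (Polynomial ℝ) (RatFunc ℝ) z) ∧
    (∃ z ∈ SGKM n,
      TR 1 (RatFunc.X * (1 - 4 / (RatFunc.X ^ 2 - 1))) 0 f =
        algebraMap (Polynomial ℝ) (RatFunc ℝ) z) := by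
  intro n hn f hf
  obtain ⟨hdeg, g, hg⟩ := (mem_SGKM_iff hn).1 hf
  exact ⟨T₃_mem_SGKM hn hf,
    ⟨_, T₂_mem_SGKM hn hdeg hg, T₂_eq_algebraMap hg⟩,
    ⟨_, T₁_mem_SGKM hn hdeg hg, T₁_eq_algebraMap hg⟩⟩
end

section
/- Let T(y) = p y'' + q y' + r y, let φ be a function with rational logarithmic derivative w = φ'/φ satisfying T(φ) = λ₀φ, let b be a nonzero rational function, and define A(y) = b(y' − w y), B(y) = (p/b)(y' − ŵ y) with ŵ = −w − q/p + b'/b. Then T = B∘A + λ₀, and the partner operator T̂ = A∘B + λ₀ has second-order coefficient p and first-order coefficient q̂ = q + p' − 2p b'/b; moreover T̂∘A = A∘T. -/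
/-!
Since `φ'/φ = w` and `T φ = λ₀ φ`, the coefficient `r` satisfies the Riccati equation
`p (w' + w²) + q w + r = λ₀`. Expanding `B (A y)` with the choice of `ŵ`, this equation is exactly
what makes `B ∘ A + λ₀` reproduce `T`; expanding `A (B y)` the same way gives the coefficients of
`T̂`. Finally `T̂ (A y) = A (B (A y)) + λ₀ A y = A (T y - λ₀ y) + λ₀ A y = A (T y)`, because `A` is
linear and only sees the germ of its argument.
-/

/-- First-order operator `A(y) = b(y' − w y)`. -/
noncomputable def Aop (b w y : ℝ → ℝ) : ℝ → ℝ :=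
  fun t => b t * (deriv y t - w t * y t)

/-- First-order operator `B(y) = (p/b)(y' − ŵ y)`. -/
noncomputable def Bop (p b wh y : ℝ → ℝ) : ℝ → ℝ :=
  fun t => (p t / b t) * (deriv y t - wh t * y t)

/-- Second-order operator `T(y) = p y'' + q y' + r y`. -/
noncomputable def Dop (p q r y : ℝ → ℝ) : ℝ → ℝ :=
  fun t => p t * deriv (deriv y) t + q t * deriv y t + r t * y t

open Filter Topology

section Operators

variable {p q r b w y f g : ℝ → ℝ} {x : ℝ}

theorem Bop_eq_Aop (p b wh : ℝ → ℝ) : Bop p b wh = Aop (fun t => p t / b t) wh := rfl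

theorem deriv_Aop (hb : DifferentiableAt ℝ b x) (hw : DifferentiableAt ℝ w x)
    (hy : DifferentiableAt ℝ y x) (hy' : DifferentiableAt ℝ (deriv y) x) :
    deriv (Aop b w y) x = deriv b x * (deriv y x - w x * y x) +
      b x * (deriv (deriv y) x - deriv w x * y x - w x * deriv y x) := by
  unfold Aop
  rw [deriv_fun_mul hb (hy'.fun_sub (hw.fun_mul hy)), deriv_fun_sub hy' (hw.fun_mul hy),
    deriv_fun_mul hw hy]
  ring

theorem Aop_congr_of_eventuallyEq (h : f =ᶠ[𝓝 x] g) : Aop b w f x = Aop b w g x := by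
  simp only [Aop, h.deriv_eq, h.eq_of_nhds]

theorem Aop_sub_const_mul (hf : DifferentiableAt ℝ f x) (hy : DifferentiableAt ℝ y x) (c : ℝ) :
    Aop b w (fun t => f t - c * y t) x = Aop b w f x - c * Aop b w y x := by
  simp only [Aop]
  rw [deriv_fun_sub hf (hy.const_mul c), deriv_const_mul c hy]
  ring

theorem DifferentiableAt.Dop (hp : DifferentiableAt ℝ p x) (hq : DifferentiableAt ℝ q x)
    (hr : DifferentiableAt ℝ r x) (hy : DifferentiableAt ℝ y x)
    (hy' : DifferentiableAt ℝ (deriv y) x) (hy'' : DifferentiableAt ℝ (deriv (deriv y)) x) :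
    DifferentiableAt ℝ (Dop p q r y) x :=
  ((hp.mul hy'').add (hq.mul hy')).add (hr.mul hy)

end Operators

section Factorization

variable {p q r b w wh φ y : ℝ → ℝ} {x l0 : ℝ}

theorem riccati_of_Dop_eq_const_mul (hφ0 : φ x ≠ 0) (hφ : DifferentiableAt ℝ φ x)
    (hw : DifferentiableAt ℝ w x) (hlog : deriv φ =ᶠ[𝓝 x] fun t => w t * φ t)
    (hT : Dop p q r φ x = l0 * φ x) :
    p x * (deriv w x + w x ^ 2) + q x * w x + r x = l0 := by
  have hφ'' : deriv (deriv φ) x = deriv w x * φ x + w x * deriv φ x := by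
    rw [hlog.deriv_eq, deriv_fun_mul hw hφ]
  rw [Dop, hφ'', hlog.eq_of_nhds] at hT
  apply mul_right_cancel₀ hφ0
  linear_combination hT

theorem Bop_Aop_add_const_mul (hp0 : p x ≠ 0) (hb0 : b x ≠ 0)
    (hb : DifferentiableAt ℝ b x) (hw : DifferentiableAt ℝ w x)
    (hy : DifferentiableAt ℝ y x) (hy' : DifferentiableAt ℝ (deriv y) x)
    (hric : p x * (deriv w x + w x ^ 2) + q x * w x + r x = l0)
    (hwh : wh x = -w x - q x / p x + deriv b x / b x) :
    Bop p b wh (Aop b w y) x + l0 * y x = Dop p q r y x := by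
  rw [Bop, deriv_Aop hb hw hy hy', Dop, ← hric, hwh, Aop]
  field_simp
  ring

noncomputable def partnerPotential (p b w wh : ℝ → ℝ) (l0 : ℝ) : ℝ → ℝ :=
  fun t => l0 - (deriv p t - p t * deriv b t / b t) * wh t - p t * deriv wh t + p t * w t * wh t

theorem Aop_Bop_add_const_mul (hp0 : p x ≠ 0) (hb0 : b x ≠ 0)
    (hp : DifferentiableAt ℝ p x) (hb : DifferentiableAt ℝ b x) (hwh' : DifferentiableAt ℝ wh x)
    (hy : DifferentiableAt ℝ y x) (hy' : DifferentiableAt ℝ (deriv y) x)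
    (hwh : wh x = -w x - q x / p x + deriv b x / b x) :
    Aop b w (Bop p b wh y) x + l0 * y x =
      p x * deriv (deriv y) x + (q x + deriv p x - 2 * p x * deriv b x / b x) * deriv y x +
        partnerPotential p b w wh l0 x * y x := by
  rw [Aop, Bop_eq_Aop, deriv_Aop (hp.fun_div hb hb0) hwh' hy hy', deriv_fun_div hp hb hb0, Aop,
    partnerPotential, hwh]
  field_simp
  ring

end Factorization

theorem stmt12_general (s : Set ℝ) (hs : IsOpen s)
    (p q r b w wh φ : ℝ → ℝ) (l0 : ℝ)
    (hpd : ∀ x ∈ s, DifferentiableAt ℝ p x)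
    (hqd : ∀ x ∈ s, DifferentiableAt ℝ q x)
    (hrd : ∀ x ∈ s, DifferentiableAt ℝ r x)
    (hbd : ∀ x ∈ s, DifferentiableAt ℝ b x)
    (hwd : ∀ x ∈ s, DifferentiableAt ℝ w x)
    (hwhd : ∀ x ∈ s, DifferentiableAt ℝ wh x)
    (hp0 : ∀ x ∈ s, p x ≠ 0) (hb0 : ∀ x ∈ s, b x ≠ 0)
    (hphi0 : ∀ x ∈ s, φ x ≠ 0)
    (hphid : ∀ x ∈ s, DifferentiableAt ℝ φ x)
    (hw : ∀ x ∈ s, deriv φ x = w x * φ x)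
    (hTphi : ∀ x ∈ s, Dop p q r φ x = l0 * φ x)
    (hwh : ∀ x ∈ s, wh x = -w x - q x / p x + deriv b x / b x) :
    (∀ y : ℝ → ℝ, (∀ x ∈ s, DifferentiableAt ℝ y x) →
      (∀ x ∈ s, DifferentiableAt ℝ (deriv y) x) →
      ∀ x ∈ s, Bop p b wh (Aop b w y) x + l0 * y x = Dop p q r y x) ∧
    (∃ rh : ℝ → ℝ, ∀ y : ℝ → ℝ, (∀ x ∈ s, DifferentiableAt ℝ y x) →
      (∀ x ∈ s, DifferentiableAt ℝ (deriv y) x) →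
      ∀ x ∈ s, Aop b w (Bop p b wh y) x + l0 * y x =
        p x * deriv (deriv y) x +
          (q x + deriv p x - 2 * p x * deriv b x / b x) * deriv y x + rh x * y x) ∧
    (∀ y : ℝ → ℝ, (∀ x ∈ s, DifferentiableAt ℝ y x) →
      (∀ x ∈ s, DifferentiableAt ℝ (deriv y) x) →
      (∀ x ∈ s, DifferentiableAt ℝ (deriv (deriv y)) x) →
      ∀ x ∈ s, Aop b w (Bop p b wh (Aop b w y)) x + l0 * Aop b w y x =
        Aop b w (Dop p q r y) x) := by
  have factor : ∀ y : ℝ → ℝ, (∀ x ∈ s, DifferentiableAt ℝ y x) →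
      (∀ x ∈ s, DifferentiableAt ℝ (deriv y) x) →
      ∀ x ∈ s, Bop p b wh (Aop b w y) x + l0 * y x = Dop p q r y x := by
    intro y hy hy' x hx
    have hric := riccati_of_Dop_eq_const_mul (hphi0 x hx) (hphid x hx) (hwd x hx)
      (eventuallyEq_of_mem (hs.mem_nhds hx) hw) (hTphi x hx)
    exact Bop_Aop_add_const_mul (hp0 x hx) (hb0 x hx) (hbd x hx) (hwd x hx) (hy x hx) (hy' x hx)
      hric (hwh x hx)
  refine ⟨factor, ⟨partnerPotential p b w wh l0, fun y hy hy' x hx =>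
    Aop_Bop_add_const_mul (hp0 x hx) (hb0 x hx) (hpd x hx) (hbd x hx) (hwhd x hx) (hy x hx)
      (hy' x hx) (hwh x hx)⟩, fun y hy hy' hy'' x hx => ?_⟩
  have hBA : Bop p b wh (Aop b w y) =ᶠ[𝓝 x] fun t => Dop p q r y t - l0 * y t :=
    eventuallyEq_of_mem (hs.mem_nhds hx) fun t ht => eq_sub_of_add_eq (factor y hy hy' t ht)
  rw [Aop_congr_of_eventuallyEq hBA, Aop_sub_const_mul ((hpd x hx).Dop (hqd x hx) (hrd x hx)
    (hy x hx) (hy' x hx) (hy'' x hx)) (hy x hx)]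
  ring

/-- Rational factorization: with `w = φ'/φ`, `T(φ) = λ₀φ`, and
`ŵ = −w − q/p + b'/b`, one has `T = B∘A + λ₀`; the partner `T̂ = A∘B + λ₀` is a
second-order operator with leading coefficient `p` and first-order coefficient
`q̂ = q + p' − 2p b'/b`; moreover `T̂∘A = A∘T`. -/
theorem stmt12 (s : Set ℝ) (hs : IsOpen s)
    (p q r b w wh φ : ℝ → ℝ) (l0 : ℝ)
    (hpd : ∀ x ∈ s, DifferentiableAt ℝ p x)
    (hqd : ∀ x ∈ s, DifferentiableAt ℝ q x)
    (hrd : ∀ x ∈ s, DifferentiableAt ℝ r x)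
    (hbd : ∀ x ∈ s, DifferentiableAt ℝ b x)
    (hwd : ∀ x ∈ s, DifferentiableAt ℝ w x)
    (hwhd : ∀ x ∈ s, DifferentiableAt ℝ wh x)
    (hp0 : ∀ x ∈ s, p x ≠ 0) (hb0 : ∀ x ∈ s, b x ≠ 0)
    (hphi0 : ∀ x ∈ s, φ x ≠ 0)
    (hphid : ∀ x ∈ s, DifferentiableAt ℝ φ x)
    (hphid2 : ∀ x ∈ s, DifferentiableAt ℝ (deriv φ) x)
    (hw : ∀ x ∈ s, deriv φ x = w x * φ x)
    (hTphi : ∀ x ∈ s, Dop p q r φ x = l0 * φ x)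
    (hwh : ∀ x ∈ s, wh x = -w x - q x / p x + deriv b x / b x) :
    (∀ y : ℝ → ℝ, (∀ x ∈ s, DifferentiableAt ℝ y x) →
      (∀ x ∈ s, DifferentiableAt ℝ (deriv y) x) →
      ∀ x ∈ s, Bop p b wh (Aop b w y) x + l0 * y x = Dop p q r y x) ∧
    (∃ rh : ℝ → ℝ, ∀ y : ℝ → ℝ, (∀ x ∈ s, DifferentiableAt ℝ y x) →
      (∀ x ∈ s, DifferentiableAt ℝ (deriv y) x) →
      ∀ x ∈ s, Aop b w (Bop p b wh y) x + l0 * y x =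
        p x * deriv (deriv y) x +
          (q x + deriv p x - 2 * p x * deriv b x / b x) * deriv y x + rh x * y x) ∧
    (∀ y : ℝ → ℝ, (∀ x ∈ s, DifferentiableAt ℝ y x) →
      (∀ x ∈ s, DifferentiableAt ℝ (deriv y) x) →
      (∀ x ∈ s, DifferentiableAt ℝ (deriv (deriv y)) x) →
      ∀ x ∈ s, Aop b w (Bop p b wh (Aop b w y)) x + l0 * Aop b w y x =
        Aop b w (Dop p q r y) x) :=
  stmt12_general s hs p q r b w wh φ l0 hpd hqd hrd hbd hwd hwhd hp0 hb0 hphi0 hphid hw hTphi hwh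
end
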